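/- arXiv:1402.7301 — 5 statements merged into one kernel-verified Lean document; each statement's English description precedes it below -/
import Mathlib

section
/- Main Edge Elimination Theorem: Let pq be an edge of a TSP instance and let r, s be two distinct potential points with respect to pq, certified by coverings (R₁, R₂) and (S₁, S₂) respectively, with r ∉ S₁ ∪ S₂ and s ∉ R₁ ∪ R₂. If both l(pq) − l(rs) + min_{z∈S₁}(l(sz) − l(pz)) + min_{y∈R₂}(l(ry) − l(qy)) > 0 and l(pq) − l(rs) + min_{x∈R₁}(l(rx) − l(px)) + min_{w∈S₂}(l(sw) − l(qw)) > 0, then no optimum TSP tour contains the edge pq. -/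
/-- A tour (Hamiltonian cycle), encoded as a cyclic permutation with no fixed points. -/
def IsTour {V : Type*} [Fintype V] (σ : Equiv.Perm V) : Prop :=
  σ.IsCycle ∧ ∀ v : V, σ v ≠ v

/-- The length of a tour. -/
noncomputable def tourLength {V : Type*} [Fintype V] (l : V → V → ℝ)
    (σ : Equiv.Perm V) : ℝ :=
  ∑ v, l v (σ v)

/-- An optimum tour: a tour of minimum length. -/
def IsOptimumTour {V : Type*} [Fintype V] (l : V → V → ℝ) (σ : Equiv.Perm V) : Prop :=
  IsTour σ ∧ ∀ τ : Equiv.Perm V, IsTour τ → tourLength l σ ≤ tourLength l τ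

/-- The edge `{a,b}` belongs to the tour `σ`. -/
def edgeIn {V : Type*} [Fintype V] (σ : Equiv.Perm V) (a b : V) : Prop :=
  σ a = b ∨ σ b = a

/-- Edges `pq` and `xy` are compatible. -/
def Compatible {V : Type*} (l : V → V → ℝ) (p q x y : V) : Prop :=
  l p q + l x y ≤ max (l p x + l q y) (l p y + l q x)

/-- `(R₁, R₂)` certifies that `r` is a potential point with respect to the edge `pq`:
the set `R = {x | rx ∈ E and rx compatible with pq}` is covered by `R₁ ∪ R₂`, and in
every optimum tour containing `pq` the two tour-neighbours of `r` do not both lie in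
`R₁`, and do not both lie in `R₂`. -/
def Certifies {V : Type*} [Fintype V] (l : V → V → ℝ) (E : V → V → Prop)
    (p q r : V) (R₁ R₂ : Set V) : Prop :=
  (∀ x : V, E r x → Compatible l p q r x → x ∈ R₁ ∪ R₂) ∧
  ∀ σ : Equiv.Perm V, IsOptimumTour l σ → edgeIn σ p q →
    ¬(σ r ∈ R₁ ∧ σ⁻¹ r ∈ R₁) ∧ ¬(σ r ∈ R₂ ∧ σ⁻¹ r ∈ R₂)

/-!
Orient an optimum tour `σ` through `pq` so that `σ p = q` and read it as the cyclic list `q … p`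
given by `σ.toList q`; every rearrangement of that list is again a tour, so the list minimises
`cycleWeight` among its permutations. A 2-opt exchange shows that every tour edge `t t'` with
`t ≠ p` satisfies `l p q + l t t' ≤ l p t + l q t'`, so both tour-neighbours of `r` are compatible
with `pq` and the certificate puts one of them, `x`, in `R₁` and the other, `y`, in `R₂`; likewise
`z ∈ S₁` and `w ∈ S₂` for `s`. As `s ∉ R₁ ∪ R₂` and `r ∉ S₁ ∪ S₂`, `rs` is not a tour edge, and
cutting the list at `pq`, `r` and `s` leaves three paths. In each relative position of `x` and `w`,
either `pq, rx, sw ↦ px, rs, qw` or `pq, ry, sz ↦ pz, rs, qy` reconnects them into a tour, and the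
resulting inequality contradicts one of the two hypotheses.
-/

namespace List

variable {V : Type*} (l : V → V → ℝ)

def pathWeight : List V → ℝ
  | [] => 0
  | [_] => 0
  | a :: b :: t => l a b + pathWeight (b :: t)

def cycleWeight (L : List V) : ℝ := (zipWith l L (L.rotate 1)).sum

variable {l}

@[simp] lemma pathWeight_singleton (a : V) : pathWeight l [a] = 0 := rfl

lemma pathWeight_cons {B : List V} (hB : B ≠ []) (a : V) :
    pathWeight l (a :: B) = l a (B.head hB) + pathWeight l B := by
  obtain ⟨b, t, rfl⟩ := exists_cons_of_ne_nil hB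
  rfl

lemma pathWeight_append {A B : List V} (hA : A ≠ []) (hB : B ≠ []) :
    pathWeight l (A ++ B) = pathWeight l A + l (A.getLast hA) (B.head hB) + pathWeight l B := by
  induction A with
  | nil => contradiction
  | cons a A ih =>
    rcases eq_or_ne A [] with rfl | hA'
    · simp [pathWeight_cons hB]
    · rw [cons_append, pathWeight_cons (by simp [hA']), pathWeight_cons hA', ih hA',
        head_append_of_ne_nil hA', getLast_cons hA']
      ring

lemma pathWeight_reverse (hl : ∀ a b, l a b = l b a) (A : List V) :
    pathWeight l A.reverse = pathWeight l A := by
  induction A with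
  | nil => rfl
  | cons a A ih =>
    rcases eq_or_ne A [] with rfl | hA
    · rfl
    · rw [reverse_cons, pathWeight_append (by simpa) (cons_ne_nil a []), ih,
        pathWeight_cons hA, getLast_reverse, hl]
      simp only [pathWeight_singleton, head_cons]
      ring

lemma cycleWeight_cons_eq_pathWeight (a : V) (t : List V) :
    cycleWeight l (a :: t) = pathWeight l (a :: t ++ [a]) := by
  suffices ∀ b, (zipWith l (b :: t) (t ++ [a])).sum = pathWeight l (b :: t ++ [a]) by
    simpa [cycleWeight] using this a
  induction t with
  | nil => simp [pathWeight]
  | cons c t ih => intro b; simp [pathWeight, ih]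

lemma cycleWeight_append {A B : List V} (hA : A ≠ []) (hB : B ≠ []) :
    cycleWeight l (A ++ B) = pathWeight l A + pathWeight l B
      + l (A.getLast hA) (B.head hB) + l (B.getLast hB) (A.head hA) := by
  obtain ⟨a, A, rfl⟩ := exists_cons_of_ne_nil hA
  rw [cons_append, cycleWeight_cons_eq_pathWeight, ← cons_append, append_assoc,
    pathWeight_append hA (by simp), pathWeight_append hB (cons_ne_nil a [])]
  simp only [head_append_of_ne_nil hB, head_cons, pathWeight_singleton, add_zero]
  ring

lemma cycleWeight_append_append {A B C : List V} (hA : A ≠ []) (hB : B ≠ []) (hC : C ≠ []) :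
    cycleWeight l (A ++ B ++ C) = pathWeight l A + pathWeight l B + pathWeight l C
      + l (A.getLast hA) (B.head hB) + l (B.getLast hB) (C.head hC)
      + l (C.getLast hC) (A.head hA) := by
  rw [append_assoc, cycleWeight_append hA (by simp [hB]), pathWeight_append hB hC,
    head_append_of_ne_nil hB, getLast_append_of_ne_nil _ hC]
  ring

variable (l) in
def IsOptimalCyclicOrder (L : List V) : Prop :=
  ∀ L' : List V, L' ~ L → cycleWeight l L ≤ cycleWeight l L'

theorem IsOptimalCyclicOrder.two_opt (hl : ∀ a b, l a b = l b a) {P Q : List V}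
    (h : IsOptimalCyclicOrder l (P ++ Q)) (hP : P ≠ []) (hQ : Q ≠ []) :
    l (P.getLast hP) (Q.head hQ) + l (Q.getLast hQ) (P.head hP)
      ≤ l (P.head hP) (Q.head hQ) + l (Q.getLast hQ) (P.getLast hP) := by
  have := h (P.reverse ++ Q) (reverse_perm P |>.append_right Q)
  rw [cycleWeight_append hP hQ, cycleWeight_append (by simpa) hQ, pathWeight_reverse hl,
    head_reverse, getLast_reverse] at this
  linarith

section ThreeOpt

variable [DecidableEq V] {X Y Z : List V} (h : IsOptimalCyclicOrder l (X ++ Y ++ Z))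
  (hX : X ≠ []) (hY : Y ≠ []) (hZ : Z ≠ [])
include h

theorem IsOptimalCyclicOrder.swap :
    l (X.getLast hX) (Y.head hY) + l (Y.getLast hY) (Z.head hZ) + l (Z.getLast hZ) (X.head hX)
      ≤ l (X.getLast hX) (Z.head hZ) + l (Z.getLast hZ) (Y.head hY)
        + l (Y.getLast hY) (X.head hX) := by
  have := h (X ++ Z ++ Y) (perm_iff_count.2 fun v => by simp [count_append]; omega)
  rw [cycleWeight_append_append hX hY hZ, cycleWeight_append_append hX hZ hY] at this
  linarith

variable (hl : ∀ a b, l a b = l b a)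
include hl

theorem IsOptimalCyclicOrder.swap_reverse :
    l (X.getLast hX) (Y.head hY) + l (Y.getLast hY) (Z.head hZ) + l (Z.getLast hZ) (X.head hX)
      ≤ l (X.getLast hX) (Z.head hZ) + l (Z.getLast hZ) (Y.getLast hY)
        + l (Y.head hY) (X.head hX) := by
  have := h (X ++ Z ++ Y.reverse) (perm_iff_count.2 fun v => by simp [count_append]; omega)
  rw [cycleWeight_append_append hX hY hZ, cycleWeight_append_append hX hZ (by simpa),
    pathWeight_reverse hl, head_reverse, getLast_reverse] at this
  linarith

theorem IsOptimalCyclicOrder.reverse_reverse :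
    l (X.getLast hX) (Y.head hY) + l (Y.getLast hY) (Z.head hZ) + l (Z.getLast hZ) (X.head hX)
      ≤ l (X.getLast hX) (Y.getLast hY) + l (Y.head hY) (Z.getLast hZ)
        + l (Z.head hZ) (X.head hX) := by
  have := h (X ++ Y.reverse ++ Z.reverse) (perm_iff_count.2 fun v => by simp [count_append])
  rw [cycleWeight_append_append hX hY hZ, cycleWeight_append_append hX (by simpa) (by simpa),
    pathWeight_reverse hl, pathWeight_reverse hl, head_reverse, getLast_reverse, head_reverse,
    getLast_reverse] at this
  linarith

theorem IsOptimalCyclicOrder.reverse_swap :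
    l (X.getLast hX) (Y.head hY) + l (Y.getLast hY) (Z.head hZ) + l (Z.getLast hZ) (X.head hX)
      ≤ l (X.getLast hX) (Z.getLast hZ) + l (Z.head hZ) (Y.head hY)
        + l (Y.getLast hY) (X.head hX) := by
  have := h (X ++ Z.reverse ++ Y) (perm_iff_count.2 fun v => by simp [count_append]; omega)
  rw [cycleWeight_append_append hX hY hZ, cycleWeight_append_append hX (by simpa) hY,
    pathWeight_reverse hl, head_reverse, getLast_reverse] at this
  linarith

end ThreeOpt

theorem IsOptimalCyclicOrder.exchange [DecidableEq V] (hl : ∀ a b, l a b = l b a)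
    {A B C : List V} {p q r s x y z w : V} (h : IsOptimalCyclicOrder l (A ++ r :: B ++ s :: C))
    (hA : A ≠ []) (hB : B ≠ []) (hC : C ≠ []) (hq : A.head hA = q) (hp : C.getLast hC = p)
    (hx : x = A.getLast hA ∧ y = B.head hB ∨ x = B.head hB ∧ y = A.getLast hA)
    (hz : z = B.getLast hB ∧ w = C.head hC ∨ z = C.head hC ∧ w = B.getLast hB) :
    l p q + l r x + l s w ≤ l p x + l r s + l q w ∨
      l p q + l s z + l r y ≤ l p z + l r s + l q y := by
  have hAr : A ++ [r] ≠ [] := by simp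
  have hsC : s :: C ≠ [] := cons_ne_nil s C
  have h₁ : IsOptimalCyclicOrder l (A ++ [r] ++ B ++ s :: C) := by simpa using h
  have h₂ : IsOptimalCyclicOrder l (A ++ [r] ++ (B ++ [s]) ++ C) := by simpa using h
  subst hp hq
  -- Only when `x` precedes `r` and `w` follows `s` does `pq, rx, sw ↦ px, rs, qw` fail to give
  -- a tour; then `pq, ry, sz ↦ pz, rs, qy` does.
  rcases hx with ⟨rfl, rfl⟩ | ⟨rfl, rfl⟩ <;> rcases hz with ⟨rfl, rfl⟩ | ⟨rfl, rfl⟩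
  · right
    have := h₁.swap_reverse hAr hB hsC hl
    simp only [getLast_append_singleton, head_append_of_ne_nil hA, head_cons,
      getLast_cons hC] at this
    linarith [hl r s, hl (B.head hB) (A.head hA), hl (B.getLast hB) s]
  · left
    have := h.reverse_swap hA (cons_ne_nil r B) hsC hl
    simp only [head_cons, getLast_cons hB, getLast_cons hC] at this
    linarith [hl r s, hl (A.getLast hA) r, hl (B.getLast hB) s, hl (B.getLast hB) (A.head hA),
      hl (A.getLast hA) (C.getLast hC)]
  · left
    have := h₂.reverse_reverse hAr (by simp) hC hl
    simp only [getLast_append_singleton, head_append_of_ne_nil hA,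
      head_append_of_ne_nil hB] at this
    linarith [hl (B.head hB) (C.getLast hC), hl (C.head hC) (A.head hA)]
  · left
    have := h₁.swap hAr hB hsC
    simp only [getLast_append_singleton, head_append_of_ne_nil hA, head_cons,
      getLast_cons hC] at this
    linarith [hl (B.getLast hB) (A.head hA), hl (B.getLast hB) s]

variable [DecidableEq V]

lemma map_formPerm_eq_rotate {L : List V} (hL : L.Nodup) : L.map L.formPerm = L.rotate 1 := by
  refine ext_getElem (by simp) fun i h₁ h₂ => ?_
  rw [getElem_map, formPerm_apply_getElem _ hL, getElem_rotate]

lemma formPerm_getLast_append {X Y : List V} (h : (X ++ Y).Nodup) (hX : X ≠ [])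
    (hY : Y ≠ []) : (X ++ Y).formPerm (X.getLast hX) = Y.head hY := by
  obtain ⟨b, Y, rfl⟩ := exists_cons_of_ne_nil hY
  obtain ⟨X, a, rfl⟩ := (eq_nil_or_concat X).resolve_left hX
  simp only [concat_eq_append, getLast_append_singleton, head_cons, append_assoc,
    singleton_append] at h ⊢
  simpa using formPerm_apply_lt_getElem _ h X.length (by simp)

lemma formPerm_getLast_eq_head {L : List V} (hL : L ≠ []) :
    L.formPerm (L.getLast hL) = L.head hL := by
  obtain ⟨a, t, rfl⟩ := exists_cons_of_ne_nil hL
  exact formPerm_apply_getLast a t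

variable [Fintype V]

lemma tourLength_formPerm (l : V → V → ℝ) {L : List V} (hL : L.Nodup)
    (hcov : ∀ v, v ∈ L) :
    tourLength l L.formPerm = L.cycleWeight l := by
  rw [tourLength, ← Finset.sum_subset (Finset.subset_univ L.toFinset) (by simp [hcov]),
    sum_toFinset _ hL, cycleWeight, ← map_formPerm_eq_rotate hL, zipWith_map_right,
    zipWith_self]

lemma isTour_formPerm {L : List V} (hL : L.Nodup) (hcov : ∀ v, v ∈ L) (hlen : 2 ≤ L.length) :
    IsTour L.formPerm := by
  refine ⟨isCycle_formPerm hL hlen, fun v => ?_⟩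
  rw [← Equiv.Perm.mem_support, support_formPerm_of_nodup L hL]
  · simp [hcov]
  · rintro x rfl
    simp at hlen

end List

open Equiv Equiv.Perm

namespace IsTour

variable {V : Type*} [DecidableEq V] [Fintype V] {σ : Perm V} (hσ : IsTour σ)
include hσ

lemma formPerm_toList (v : V) : (σ.toList v).formPerm = σ := by
  rw [Perm.formPerm_toList, hσ.1.cycleOf_eq (hσ.2 v)]

lemma mem_toList (v u : V) : u ∈ σ.toList v :=
  mem_toList_iff.2 ⟨hσ.1.sameCycle (hσ.2 v) (hσ.2 u), mem_support.2 (hσ.2 v)⟩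

lemma two_le_length_toList (v : V) : 2 ≤ (σ.toList v).length :=
  two_le_length_toList_iff_mem_support.2 (mem_support.2 (hσ.2 v))

lemma toList_ne_nil (v : V) : σ.toList v ≠ [] := List.ne_nil_of_mem (hσ.mem_toList v v)

lemma head_toList (v : V) : (σ.toList v).head (hσ.toList_ne_nil v) = v := by
  rw [List.head_eq_getElem, toList_getElem_zero _ _ (mem_support.2 (hσ.2 v))]

section Split

variable {v : V} {X Y : List V} (h : σ.toList v = X ++ Y)
include h

lemma head_left_of_toList_eq (hX : X ≠ []) : X.head hX = v :=
  calc X.head hX = (σ.toList v).head (hσ.toList_ne_nil v) := by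
        simp only [h, List.head_append_of_ne_nil hX]
    _ = v := hσ.head_toList v

lemma apply_getLast_left_of_toList_eq (hX : X ≠ []) (hY : Y ≠ []) :
    σ (X.getLast hX) = Y.head hY := by
  rw [← hσ.formPerm_toList v, h]
  exact List.formPerm_getLast_append (h ▸ nodup_toList σ v) hX hY

lemma apply_getLast_right_of_toList_eq (hY : Y ≠ []) : σ (Y.getLast hY) = v := by
  have := List.formPerm_getLast_eq_head (hσ.toList_ne_nil v)
  rw [hσ.formPerm_toList, hσ.head_toList] at this
  simpa only [h, List.getLast_append_of_ne_nil _ hY] using this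

end Split

lemma inv_apply_and_apply_of_toList_eq {v r : V} {A B : List V} (hL : σ.toList v = A ++ r :: B)
    (hA : A ≠ []) (hB : B ≠ []) : σ⁻¹ r = A.getLast hA ∧ σ r = B.head hB := by
  refine ⟨inv_eq_iff_eq.2 ?_, ?_⟩
  · simpa using (hσ.apply_getLast_left_of_toList_eq hL hA (List.cons_ne_nil r B)).symm
  · have := hσ.apply_getLast_left_of_toList_eq (X := A ++ [r]) (by simpa using hL) (by simp) hB
    simpa using this

end IsTour

namespace IsOptimumTour

variable {V : Type*} [Fintype V] {l : V → V → ℝ} {σ : Perm V}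

lemma inv (hσ : IsOptimumTour l σ) (hl : ∀ a b, l a b = l b a) : IsOptimumTour l σ⁻¹ := by
  have hlen : tourLength l σ⁻¹ = tourLength l σ := by
    rw [tourLength, tourLength, ← Equiv.sum_comp σ]
    simp [hl]
  refine ⟨⟨hσ.1.1.inv, fun v => ?_⟩, fun τ hτ => hlen ▸ hσ.2 τ hτ⟩
  rw [Ne, inv_eq_iff_eq]
  exact fun h => hσ.1.2 v h.symm

variable [DecidableEq V]

lemma isOptimalCyclicOrder_toList (hσ : IsOptimumTour l σ) (v : V) :
    (σ.toList v).IsOptimalCyclicOrder l := by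
  intro L hL
  have hnd : L.Nodup := hL.nodup_iff.2 (nodup_toList σ v)
  have hcov : ∀ u, u ∈ L := fun u => hL.mem_iff.2 (hσ.1.mem_toList v u)
  have := hσ.2 _ (List.isTour_formPerm hnd hcov (hL.length_eq ▸ hσ.1.two_le_length_toList v))
  rwa [← hσ.1.formPerm_toList v, List.tourLength_formPerm l (nodup_toList σ v)
    (hσ.1.mem_toList v), List.tourLength_formPerm l hnd hcov] at this

theorem two_opt (hσ : IsOptimumTour l σ) (hl : ∀ a b, l a b = l b a) {a b c d : V}
    (hab : σ a = b) (hcd : σ c = d) (hac : a ≠ c) : l a b + l c d ≤ l a c + l b d := by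
  obtain ⟨X, Y, hXY⟩ := List.append_of_mem (hσ.1.mem_toList b c)
  have hsplit : σ.toList b = (X ++ [c]) ++ Y := by simp [hXY]
  have hP : X ++ [c] ≠ [] := by simp
  have hY : Y ≠ [] := by
    rintro rfl
    have := hσ.1.apply_getLast_right_of_toList_eq (X := X) (by simpa using hXY)
    exact hac (σ.injective (hab.trans (this (List.cons_ne_nil c [])).symm))
  have hYa : Y.getLast hY = a :=
    σ.injective ((hσ.1.apply_getLast_right_of_toList_eq hsplit hY).trans hab.symm)
  have h := hσ.isOptimalCyclicOrder_toList b
  rw [hsplit] at h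
  have := h.two_opt hl hP hY
  rw [hσ.1.head_left_of_toList_eq hsplit hP,
    ← hσ.1.apply_getLast_left_of_toList_eq hsplit hP hY, List.getLast_append_singleton, hcd,
    hYa] at this
  linarith

theorem compatible_apply (hσ : IsOptimumTour l σ) (hl : ∀ a b, l a b = l b a) {p q t : V}
    (hpq : σ p = q) (htp : t ≠ p) : Compatible l p q t (σ t) :=
  le_max_of_le_left (hσ.two_opt hl hpq rfl htp.symm)

theorem compatible_inv_apply (hσ : IsOptimumTour l σ) (hl : ∀ a b, l a b = l b a) {p q t : V}
    (hpq : σ p = q) (htq : t ≠ q) : Compatible l p q t (σ⁻¹ t) := by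
  have hpt : p ≠ σ⁻¹ t := fun h => htq (by simp [← hpq, h])
  have := hσ.two_opt hl (c := σ⁻¹ t) (d := t) hpq (by simp) hpt
  rw [Compatible, hl t]
  exact le_max_of_le_right this

theorem exchange_of_toList_eq (hσ : IsOptimumTour l σ) (hl : ∀ a b, l a b = l b a)
    {p q r s x y z w : V} {A B C : List V} (hpq : σ p = q)
    (hL : σ.toList q = A ++ r :: B ++ s :: C) (hrq : r ≠ q) (hsp : s ≠ p) (hrs : σ r ≠ s)
    (hx : x = σ⁻¹ r ∧ y = σ r ∨ x = σ r ∧ y = σ⁻¹ r)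
    (hz : z = σ⁻¹ s ∧ w = σ s ∨ z = σ s ∧ w = σ⁻¹ s) :
    l p q + l r x + l s w ≤ l p x + l r s + l q w ∨
      l p q + l s z + l r y ≤ l p z + l r s + l q y := by
  have hA : A ≠ [] := by
    rintro rfl
    have := hσ.1.head_left_of_toList_eq (X := r :: (B ++ s :: C)) (Y := []) (by simpa using hL)
    exact hrq (this (List.cons_ne_nil _ _))
  have hC : C ≠ [] := by
    rintro rfl
    have := hσ.1.apply_getLast_right_of_toList_eq (X := A ++ r :: B) (Y := [s]) (by simpa using hL)
    exact hsp (σ.injective ((this (List.cons_ne_nil s [])).trans hpq.symm))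
  have hB : B ≠ [] := by
    rintro rfl
    have := hσ.1.apply_getLast_left_of_toList_eq (X := A ++ [r]) (Y := s :: C)
      (by simpa using hL)
    exact hrs (by simpa using this (by simp) (List.cons_ne_nil _ _))
  have hq : A.head hA = q :=
    hσ.1.head_left_of_toList_eq (Y := r :: B ++ s :: C) (by simpa using hL) hA
  have hp : C.getLast hC = p := by
    have := hσ.1.apply_getLast_right_of_toList_eq (X := A ++ r :: B ++ [s]) (by simpa using hL) hC
    exact σ.injective (this.trans hpq.symm)
  obtain ⟨hr₁, hr₂⟩ := hσ.1.inv_apply_and_apply_of_toList_eq (B := B ++ s :: C)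
    (by simpa using hL) hA (by simp)
  obtain ⟨hs₁, hs₂⟩ := hσ.1.inv_apply_and_apply_of_toList_eq (A := A ++ r :: B)
    (by simpa using hL) (by simp) hC
  rw [hr₁, hr₂, List.head_append_of_ne_nil hB] at hx
  rw [hs₁, hs₂, List.getLast_append_of_ne_nil _ (List.cons_ne_nil r B),
    List.getLast_cons hB] at hz
  exact (hL ▸ hσ.isOptimalCyclicOrder_toList q).exchange hl hA hB hC hq hp hx hz

theorem exchange (hσ : IsOptimumTour l σ) (hl : ∀ a b, l a b = l b a)
    {p q r s x y z w : V} (hpq : σ p = q) (hrp : r ≠ p) (hrq : r ≠ q) (hsp : s ≠ p)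
    (hsq : s ≠ q) (hrs : r ≠ s) (hσrs : σ r ≠ s) (hσsr : σ s ≠ r)
    (hx : x = σ⁻¹ r ∧ y = σ r ∨ x = σ r ∧ y = σ⁻¹ r)
    (hz : z = σ⁻¹ s ∧ w = σ s ∨ z = σ s ∧ w = σ⁻¹ s) :
    l p q + l r x + l s w ≤ l p x + l r s + l q w ∨
      l p q + l s z + l r y ≤ l p z + l r s + l q y := by
  obtain ⟨X, Y, hXY⟩ := List.append_of_mem (hσ.1.mem_toList q r)
  have hs := hσ.1.mem_toList q s
  rw [hXY, List.mem_append, List.mem_cons] at hs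
  rcases hs with hs | rfl | hs
  · obtain ⟨A, B, rfl⟩ := List.append_of_mem hs
    have := hσ.exchange_of_toList_eq hl hpq (by simpa using hXY) hsq hrp hσsr hz hx
    rwa [hl s r, or_comm] at this
  · exact absurd rfl hrs
  · obtain ⟨B, C, rfl⟩ := List.append_of_mem hs
    exact hσ.exchange_of_toList_eq hl hpq (by simpa using hXY) hrq hsp hσrs hx hz

end IsOptimumTour

namespace Certifies

variable {V : Type*} [Fintype V] [DecidableEq V] {l : V → V → ℝ} {E : V → V → Prop}
  {p q t : V} {R₁ R₂ : Set V} {σ : Perm V}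

theorem apply_mem (hR : Certifies l E p q t R₁ R₂) (hσ : IsOptimumTour l σ)
    (hl : ∀ a b, l a b = l b a) (hE : ∀ v, E v (σ v)) (hpq : σ p = q) (htp : t ≠ p) :
    σ t ∈ R₁ ∪ R₂ :=
  hR.1 _ (hE t) (hσ.compatible_apply hl hpq htp)

theorem exists_neighbours (hR : Certifies l E p q t R₁ R₂) (hσ : IsOptimumTour l σ)
    (hl : ∀ a b, l a b = l b a) (hE : ∀ v, E v (σ v)) (hEsymm : ∀ a b, E a b → E b a)
    (hpq : σ p = q) (htp : t ≠ p) (htq : t ≠ q) :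
    ∃ x ∈ R₁, ∃ y ∈ R₂, x = σ⁻¹ t ∧ y = σ t ∨ x = σ t ∧ y = σ⁻¹ t := by
  have hpred : σ⁻¹ t ∈ R₁ ∪ R₂ :=
    hR.1 _ (hEsymm _ _ (by simpa using hE (σ⁻¹ t))) (hσ.compatible_inv_apply hl hpq htq)
  have hsep := hR.2 σ hσ (Or.inl hpq)
  rcases hR.apply_mem hσ hl hE hpq htp with h₁ | h₂ <;> rcases hpred with h₁' | h₂'
  · exact absurd ⟨h₁, h₁'⟩ hsep.1
  · exact ⟨σ t, h₁, σ⁻¹ t, h₂', Or.inr ⟨rfl, rfl⟩⟩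
  · exact ⟨σ⁻¹ t, h₁', σ t, h₂, Or.inl ⟨rfl, rfl⟩⟩
  · exact absurd ⟨h₂, h₂'⟩ hsep.2

end Certifies

theorem main_edge_elimination_general {V : Type*} [Fintype V] [DecidableEq V]
    (l : V → V → ℝ) (hsymm : ∀ a b, l a b = l b a)
    (E : V → V → Prop) (hEsymm : ∀ a b, E a b → E b a)
    (hE : ∀ σ : Equiv.Perm V, IsOptimumTour l σ → ∀ v : V, E v (σ v))
    (p q r s : V) (hrs : r ≠ s)
    (hrp : r ≠ p) (hrq : r ≠ q) (hsp : s ≠ p) (hsq : s ≠ q)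
    (R₁ R₂ S₁ S₂ : Finset V)
    (hR₁ : R₁.Nonempty) (hR₂ : R₂.Nonempty) (hS₁ : S₁.Nonempty) (hS₂ : S₂.Nonempty)
    (hrpot : Certifies l E p q r ↑R₁ ↑R₂)
    (hspot : Certifies l E p q s ↑S₁ ↑S₂)
    (hrnot : r ∉ S₁ ∪ S₂) (hsnot : s ∉ R₁ ∪ R₂)
    (h1 : 0 < l p q - l r s + S₁.inf' hS₁ (fun z => l s z - l p z)
            + R₂.inf' hR₂ (fun y => l r y - l q y))
    (h2 : 0 < l p q - l r s + R₁.inf' hR₁ (fun x => l r x - l p x)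
            + S₂.inf' hS₂ (fun w => l s w - l q w)) :
    ∀ σ : Equiv.Perm V, IsOptimumTour l σ → ¬ edgeIn σ p q := by
  suffices key : ∀ σ : Perm V, IsOptimumTour l σ → σ p = q → False by
    rintro σ hσ (hpq | hqp)
    · exact key σ hσ hpq
    · exact key σ⁻¹ (hσ.inv hsymm) (by simp [← hqp])
  intro σ hσ hpq
  have hσrs : σ r ≠ s := fun h =>
    hsnot (by simpa [h] using hrpot.apply_mem hσ hsymm (hE σ hσ) hpq hrp)
  have hσsr : σ s ≠ r := fun h =>
    hrnot (by simpa [h] using hspot.apply_mem hσ hsymm (hE σ hσ) hpq hsp)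
  obtain ⟨x, hx, y, hy, hxy⟩ := hrpot.exists_neighbours hσ hsymm (hE σ hσ) hEsymm hpq hrp hrq
  obtain ⟨z, hz, w, hw, hzw⟩ := hspot.exists_neighbours hσ hsymm (hE σ hσ) hEsymm hpq hsp hsq
  rcases hσ.exchange hsymm hpq hrp hrq hsp hsq hrs hσrs hσsr hxy hzw with h | h
  · linarith [R₁.inf'_le (fun x => l r x - l p x) hx, S₂.inf'_le (fun w => l s w - l q w) hw]
  · linarith [S₁.inf'_le (fun z => l s z - l p z) hz, R₂.inf'_le (fun y => l r y - l q y) hy]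

/-- **Main Edge Elimination Theorem.** -/
theorem main_edge_elimination {V : Type*} [Fintype V] [DecidableEq V]
    (l : V → V → ℝ) (hsymm : ∀ a b, l a b = l b a) (hnonneg : ∀ a b, 0 ≤ l a b)
    (E : V → V → Prop) (hEsymm : ∀ a b, E a b → E b a)
    (hE : ∀ σ : Equiv.Perm V, IsOptimumTour l σ → ∀ v : V, E v (σ v))
    (p q r s : V) (hpqE : E p q) (hrs : r ≠ s)
    (hrp : r ≠ p) (hrq : r ≠ q) (hsp : s ≠ p) (hsq : s ≠ q)
    (R₁ R₂ S₁ S₂ : Finset V)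
    (hR₁ : R₁.Nonempty) (hR₂ : R₂.Nonempty) (hS₁ : S₁.Nonempty) (hS₂ : S₂.Nonempty)
    (hrpot : Certifies l E p q r ↑R₁ ↑R₂)
    (hspot : Certifies l E p q s ↑S₁ ↑S₂)
    (hrnot : r ∉ S₁ ∪ S₂) (hsnot : s ∉ R₁ ∪ R₂)
    (h1 : 0 < l p q - l r s + S₁.inf' hS₁ (fun z => l s z - l p z)
            + R₂.inf' hR₂ (fun y => l r y - l q y))
    (h2 : 0 < l p q - l r s + R₁.inf' hR₁ (fun x => l r x - l p x)
            + S₂.inf' hS₂ (fun w => l s w - l q w)) :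
    ∀ σ : Equiv.Perm V, IsOptimumTour l σ → ¬ edgeIn σ p q :=
  main_edge_elimination_general l hsymm E hEsymm hE p q r s hrs hrp hrq hsp hsq R₁ R₂ S₁ S₂ hR₁ hR₂
    hS₁ hS₂ hrpot hspot hrnot hsnot h1 h2
end

section
/- Cone Lemma: Let pq be an edge of a planar TSP instance with EUC_2D lengths, r ∈ V \ {p,q}, s ∈ V \ {r}, δ_r > 0 with |rs| ≥ δ_r, and let s_r be the point on segment rs with |r s_r| = δ_r. With l_p = δ_r + l(pq) − l(qr) − 1 and l_q = δ_r + l(pq) − l(pr) − 1, if |p s_r| < l_p and |q s_r| < l_q, then the edges pq and rs are incompatible, i.e., l(ps)+l(qr) < l(pq)+l(rs) and l(qs)+l(pr) < l(pq)+l(rs). -/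
/-- The Euclidean plane. -/
abbrev Plane := EuclideanSpace ℝ (Fin 2)

/-- **Cone Lemma.** For a planar TSP instance with EUC_2D lengths, if the point
`s_r` on the segment `rs` at distance `δ_r` from `r` satisfies `|p s_r| < l_p` and
`|q s_r| < l_q`, then the edges `pq` and `rs` are incompatible. -/
theorem cone_lemma (l : Plane → Plane → ℝ)
    (hsymm : ∀ a b, l a b = l b a)
    (hround : ∀ a b : Plane, l a b - 1/2 ≤ dist a b ∧ dist a b ≤ l a b + 1/2)
    (p q r s sr : Plane) (hrp : r ≠ p) (hrq : r ≠ q) (hsneq : s ≠ r)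
    (δ lp lq : ℝ) (hδ : 0 < δ) (hrs : δ ≤ dist r s)
    (hlp : lp = δ + l p q - l q r - 1) (hlq : lq = δ + l p q - l p r - 1)
    (hseg : sr ∈ segment ℝ r s) (hsr : dist r sr = δ)
    (hp : dist p sr < lp) (hq : dist q sr < lq) :
    l p s + l q r < l p q + l r s ∧ l q s + l p r < l p q + l r s := by
  have hseg' : dist r sr + dist sr s = dist r s := dist_add_dist_of_mem_segment hseg
  have hss : dist sr s = dist r s - δ := by linarith
  have h1 := (hround p s).1
  have h2 := (hround q s).1
  have h3 := (hround r s).2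
  have t1 : dist p s ≤ dist p sr + dist sr s := dist_triangle p sr s
  have t2 : dist q s ≤ dist q sr + dist sr s := dist_triangle q sr s
  constructor <;> linarith
end

section
/- Circle Intersection Lemma: Let pq be an edge and r a point of a planar EUC_2D TSP instance with r ∉ {p,q}. Set l_p = δ_r + l(pq) − l(qr) − 1 and l_q = δ_r + l(pq) − l(pr) − 1 where δ_r > 0 satisfies |rs| ≥ δ_r for all vertices s ≠ r. If l_p + l_q ≥ l(pq) − 1/2, then the circle with center r and radius δ_r intersects both the circle with center p and radius l_p and the circle with center q and radius l_q; equivalently, |pr| − δ_r ≤ l_p ≤ |pr| + δ_r and |qr| − δ_r ≤ l_q ≤ |qr| + δ_r. -/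
/-- **Circle Intersection Lemma.** If `l_p + l_q ≥ l(pq) − 1/2`, then the circle
with centre `r` and radius `δ_r` intersects both the circle with centre `p` and
radius `l_p` and the circle with centre `q` and radius `l_q`; equivalently
`|pr| − δ_r ≤ l_p ≤ |pr| + δ_r` and `|qr| − δ_r ≤ l_q ≤ |qr| + δ_r`. -/
theorem circle_intersection (l : Plane → Plane → ℝ)
    (hsymm : ∀ a b, l a b = l b a)
    (hround : ∀ a b : Plane, l a b - 1/2 ≤ dist a b ∧ dist a b ≤ l a b + 1/2)
    (P : Finset Plane) (p q r : Plane) (hp : p ∈ P) (hq : q ∈ P) (hr : r ∈ P)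
    (hrp : r ≠ p) (hrq : r ≠ q)
    (δ lp lq : ℝ) (hδ : 0 < δ) (hδr : ∀ s ∈ P, s ≠ r → δ ≤ dist r s)
    (hlp : lp = δ + l p q - l q r - 1) (hlq : lq = δ + l p q - l p r - 1)
    (hbasic : l p q - 1/2 ≤ lp + lq) :
    (dist p r - δ ≤ lp ∧ lp ≤ dist p r + δ) ∧
    (dist q r - δ ≤ lq ∧ lq ≤ dist q r + δ) := by
  obtain ⟨hpq1, hpq2⟩ := hround p q
  obtain ⟨hpr1, hpr2⟩ := hround p r
  obtain ⟨hqr1, hqr2⟩ := hround q r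
  have t1 : dist p q ≤ dist p r + dist r q := dist_triangle p r q
  have e1 : dist r q = dist q r := dist_comm r q
  refine ⟨⟨?_, ?_⟩, ⟨?_, ?_⟩⟩ <;> linarith
end

section
/- Certification by 3-opt moves: Let pq be an edge, r ∈ V \ {p,q}, and R = {x : rx ∈ E and rx compatible with pq} ⊆ R_p ∪ R_q for sets R_p, R_q. If for each i ∈ {p,q} and all x, y ∈ R_i we have l(pq) + l(rx) + l(ry) > l(pr) + l(rq) + l(xy), then in every optimum tour containing pq the two tour-neighbors of r do not both lie in R_p, and do not both lie in R_q (i.e., R_p, R_q certify that r is potential with respect to pq). -/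
open Equiv Equiv.Perm Finset

namespace Equiv.Perm

variable {α : Type*}

theorem SameCycle.of_forall_sameCycle_apply {f g : Perm α} (h : ∀ u, f.SameCycle u (g u))
    {a b : α} (hab : g.SameCycle a b) : f.SameCycle a b := by
  obtain ⟨i, rfl⟩ := hab
  induction i using Int.induction_on with
  | zero => exact SameCycle.refl f a
  | succ i ih =>
    have step : (g ^ ((i : ℤ) + 1)) a = g ((g ^ (i : ℤ)) a) := by
      rw [add_comm, zpow_one_add, mul_apply]
    exact step ▸ ih.trans (h _)
  | pred i ih =>
    have step : g ((g ^ (-(i : ℤ) - 1)) a) = (g ^ (-(i : ℤ))) a := by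
      rw [← mul_apply, ← zpow_one_add, add_sub_cancel]
    exact ih.trans (step ▸ h _).symm

variable [DecidableEq α]

theorem sameCycle_mul_swap_apply {g : Perm α} {r : α} (hr : g r = r) (p u : α) :
    (g * swap p r).SameCycle u (g u) := by
  by_cases hup : u = p
  · subst hup
    exact ⟨2, by simp [zpow_ofNat, sq, hr]⟩
  by_cases hur : u = r
  · subst hur
    rw [hr]
  exact ⟨1, by simp [swap_apply_of_ne_of_ne hup hur]⟩

theorem IsCycle.mul_swap_of_apply_eq_self {g : Perm α} (hg : g.IsCycle) {p r : α}
    (hp : g p ≠ p) (hr : g r = r) : (g * swap p r).IsCycle := by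
  have hpr : p ≠ r := by rintro rfl; exact hp hr
  have hpr' : (g * swap p r).SameCycle p r := ⟨1, by simp [hr]⟩
  refine ⟨r, ?_, fun y hy => ?_⟩
  · rw [mul_apply, swap_apply_right]
    exact fun h => hpr (g.injective (h.trans hr.symm))
  by_cases hyr : y = r
  · rw [hyr]
  have hgy : g y ≠ y := by
    by_cases hyp : y = p
    · rwa [hyp]
    · simpa [swap_apply_of_ne_of_ne hyp hyr] using hy
  exact hpr'.symm.trans <| SameCycle.of_forall_sameCycle_apply
    (sameCycle_mul_swap_apply hr p) (hg.sameCycle hp hgy)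

end Equiv.Perm

section Tours

variable {V : Type*}

theorem tourLength_sub_tourLength [Fintype V] (l : V → V → ℝ) {σ τ : Perm V} (s : Finset V)
    (h : ∀ v ∉ s, τ v = σ v) :
    tourLength l τ - tourLength l σ = ∑ v ∈ s, (l v (τ v) - l v (σ v)) := by
  rw [tourLength, tourLength, ← sum_sub_distrib]
  exact (sum_subset (subset_univ s) fun v _ hv => by simp [h v hv]).symm

variable [DecidableEq V]

/-- The tour `σ` with `r` taken out and reinserted between `p` and `σ p`. -/
def moveAfter (σ : Perm V) (r p : V) : Perm V :=
  swap r (σ r) * σ * swap p r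

section moveAfter

variable {σ : Perm V} {r p : V}

@[simp]
theorem moveAfter_apply_anchor : moveAfter σ r p p = r := by
  simp [moveAfter]

theorem moveAfter_apply_moved (hrp : r ≠ p) (hrq : r ≠ σ p) : moveAfter σ r p r = σ p := by
  simp [moveAfter, swap_apply_of_ne_of_ne (Ne.symm hrq) (σ.injective.ne hrp).symm]

theorem moveAfter_apply_pred (hrq : r ≠ σ p) (hr : σ r ≠ r) :
    moveAfter σ r p (σ⁻¹ r) = σ r := by
  have hyp : σ⁻¹ r ≠ p := by rintro h; exact hrq (by simp [← h])
  have hyr : σ⁻¹ r ≠ r := by rintro h; exact hr (by conv_lhs => rw [← h]; simp)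
  simp only [moveAfter, mul_apply, swap_apply_of_ne_of_ne hyp hyr]
  simp

theorem moveAfter_apply_of_ne {v : V} (hp : v ≠ p) (hr : v ≠ r) (hy : v ≠ σ⁻¹ r) :
    moveAfter σ r p v = σ v := by
  have : σ v ≠ r := by rintro h; exact hy (by simp [← h])
  simp [moveAfter, swap_apply_of_ne_of_ne hp hr, swap_apply_of_ne_of_ne this (σ.injective.ne hr)]

end moveAfter

variable [Fintype V]

theorem IsTour.apply_apply_ne {σ : Perm V} (hσ : IsTour σ) (hV : 2 < Fintype.card V) (v : V) :
    σ (σ v) ≠ v := by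
  intro h
  have hsq : σ ^ 2 = 1 := hσ.1.pow_eq_one_iff.2 ⟨v, hσ.2 v, by simpa [sq] using h⟩
  have hsupp : σ.support = univ := eq_univ_of_forall fun w => mem_support.2 (hσ.2 w)
  have := orderOf_le_of_pow_eq_one two_pos hsq
  rw [hσ.1.orderOf, hsupp, card_univ] at this
  omega

theorem IsTour.moveAfter {σ : Perm V} (hσ : IsTour σ) {r p : V} (hrp : r ≠ p) (hrq : r ≠ σ p) :
    IsTour (moveAfter σ r p) := by
  have hV : 2 < Fintype.card V :=
    Fintype.two_lt_card_iff.2 ⟨p, σ p, r, (hσ.2 p).symm, hrp.symm, hrq.symm⟩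
  have hσσr := hσ.apply_apply_ne hV r
  refine ⟨?_, fun v => ?_⟩
  · refine (hσ.1.swap_mul (hσ.2 r) hσσr).mul_swap_of_apply_eq_self (p := p) ?_ (by simp)
    rw [mul_apply, swap_apply_of_ne_of_ne (Ne.symm hrq) (σ.injective.ne hrp.symm)]
    exact hσ.2 p
  by_cases hvp : v = p
  · simpa [hvp] using hrp
  by_cases hvr : v = r
  · simpa [hvr, moveAfter_apply_moved hrp hrq] using hrq.symm
  by_cases hvy : v = σ⁻¹ r
  · rw [hvy, moveAfter_apply_pred hrq (hσ.2 r)]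
    exact fun h => hσσr (by simp [h])
  · rw [moveAfter_apply_of_ne hvp hvr hvy]
    exact hσ.2 v

theorem tourLength_moveAfter_sub (l : V → V → ℝ) {σ : Perm V} {r p : V} (hrp : r ≠ p)
    (hrq : r ≠ σ p) (hr : σ r ≠ r) :
    tourLength l (moveAfter σ r p) - tourLength l σ =
      l p r + l (σ⁻¹ r) (σ r) + l r (σ p) - (l p (σ p) + l (σ⁻¹ r) r + l r (σ r)) := by
  have hpy : p ≠ σ⁻¹ r := by rintro h; exact hrq (by simp [h])
  have hyr : σ⁻¹ r ≠ r := by rintro h; exact hr (by conv_lhs => rw [← h]; simp)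
  rw [tourLength_sub_tourLength l {p, σ⁻¹ r, r} fun v hv => by
      simp only [mem_insert, mem_singleton, not_or] at hv
      exact moveAfter_apply_of_ne hv.1 hv.2.2 hv.2.1,
    sum_insert (by simp only [mem_insert, mem_singleton, not_or]; exact ⟨hpy, hrp.symm⟩),
    sum_insert (by simpa only [mem_singleton] using hyr), sum_singleton,
    moveAfter_apply_anchor, moveAfter_apply_pred hrq hr, moveAfter_apply_moved hrp hrq]
  simp only [coe_inv, apply_symm_apply]
  ring

theorem IsOptimumTour.three_opt_le {l : V → V → ℝ} {σ : Perm V} (hσ : IsOptimumTour l σ)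
    {r p : V} (hrp : r ≠ p) (hrq : r ≠ σ p) :
    l p (σ p) + l (σ⁻¹ r) r + l r (σ r) ≤ l p r + l (σ⁻¹ r) (σ r) + l r (σ p) := by
  have hopt := hσ.2 _ (IsTour.moveAfter hσ.1 hrp hrq)
  have hdiff := tourLength_moveAfter_sub l hrp hrq (hσ.1.2 r)
  linarith

end Tours

theorem certification_by_three_opt_general {V : Type*} [Fintype V]
    (l : V → V → ℝ) (hsymm : ∀ a b, l a b = l b a)
    (p q r : V) (hrp : r ≠ p) (hrq : r ≠ q)
    (Rp Rq : Set V)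
    (hRp : ∀ x ∈ Rp, ∀ y ∈ Rp, l p r + l r q + l x y < l p q + l r x + l r y)
    (hRq : ∀ x ∈ Rq, ∀ y ∈ Rq, l p r + l r q + l x y < l p q + l r x + l r y) :
    ∀ σ : Equiv.Perm V, IsOptimumTour l σ → edgeIn σ p q →
      ¬(σ r ∈ Rp ∧ σ⁻¹ r ∈ Rp) ∧ ¬(σ r ∈ Rq ∧ σ⁻¹ r ∈ Rq) := by
  classical
  intro σ hσ hpq
  suffices key : ∀ R : Set V, (∀ x ∈ R, ∀ y ∈ R, l p r + l r q + l x y < l p q + l r x + l r y) →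
      ¬(σ r ∈ R ∧ σ⁻¹ r ∈ R) from ⟨key Rp hRp, key Rq hRq⟩
  rintro R hR ⟨hx, hy⟩
  have hlt := hR _ hy _ hx
  have hsymm_r := hsymm r (σ⁻¹ r)
  rcases hpq with hσp | hσq
  · have := hσ.three_opt_le hrp (hσp ▸ hrq)
    rw [hσp] at this
    linarith
  · have := hσ.three_opt_le hrq (hσq ▸ hrp)
    rw [hσq] at this
    linarith [hsymm p q, hsymm p r, hsymm q r]

/-- **Certification by 3-opt moves.** If `R ⊆ R_p ∪ R_q` and for each `i ∈ {p,q}`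
and all `x, y ∈ R_i` we have `l(pq) + l(rx) + l(ry) > l(pr) + l(rq) + l(xy)`, then
in every optimum tour containing `pq` the tour-neighbours of `r` do not both lie in
`R_p`, and do not both lie in `R_q`. -/
theorem certification_by_three_opt {V : Type*} [Fintype V]
    (l : V → V → ℝ) (hsymm : ∀ a b, l a b = l b a) (hnonneg : ∀ a b, 0 ≤ l a b)
    (E : V → V → Prop) (hEsymm : ∀ a b, E a b → E b a)
    (hE : ∀ σ : Equiv.Perm V, IsOptimumTour l σ → ∀ v : V, E v (σ v))
    (p q r : V) (hpqE : E p q) (hrp : r ≠ p) (hrq : r ≠ q)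
    (Rp Rq : Set V)
    (hcover : ∀ x : V, E r x → Compatible l p q r x → x ∈ Rp ∪ Rq)
    (hRp : ∀ x ∈ Rp, ∀ y ∈ Rp, l p r + l r q + l x y < l p q + l r x + l r y)
    (hRq : ∀ x ∈ Rq, ∀ y ∈ Rq, l p r + l r q + l x y < l p q + l r x + l r y) :
    ∀ σ : Equiv.Perm V, IsOptimumTour l σ → edgeIn σ p q →
      ¬(σ r ∈ Rp ∧ σ⁻¹ r ∈ Rp) ∧ ¬(σ r ∈ Rq ∧ σ⁻¹ r ∈ Rq) :=
  certification_by_three_opt_general l hsymm p q r hrp hrq Rp Rq hRp hRq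
end

section
/- Law-of-cosines evaluation of arc endpoint distance: Let p, q, r be points in the plane forming a triangle, with ε_q the angle of triangle pqr at q and θ_q the angle at q in the triangle q r t, where t satisfies |rt| = δ_r and |qt| = l_q. If ε_q + θ_q ≤ 180° and cos(ε_q − θ_q) ≥ cos(ε_q + θ_q), then the endpoint b of the arc B_p = {x on circle C_r : |qx| ≥ l_q} farther from p satisfies |pb|² = |pq|² + l_q² − 2|pq| l_q cos(ε_q + θ_q). -/
/-!
Rotating `b` about `q` by `-2 ∡ r q b` mirrors it in the line `qr`, which yields a second common
point `b'` of the two circles with `∡ r q b' = -∡ r q b`. Hence `∡ p q b` and `∡ p q b'` are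
`∡ p q r ± ∡ r q b`, whose cosines are `cos (ε + θ)` and `cos (ε - θ)` in some order, where
`ε = ∠ p q r` and `θ = ∠ r q b`. By the law of cosines the point farther from `p` has the smaller
cosine at `q`, which is `cos (ε + θ)` by hypothesis; the law of cosines at `q` then gives `|pb|`.
-/

open EuclideanGeometry

noncomputable instance : Fact (Module.finrank ℝ Plane = 2) := ⟨by simp⟩

noncomputable instance : Module.Oriented ℝ Plane (Fin 2) :=
  ⟨(EuclideanSpace.basisFun (Fin 2) ℝ).toBasis.orientation⟩

namespace Real.Angle

theorem cos_add_eq_of_cos_add_le_cos_sub {θ φ : Angle} {a c : ℝ} (hθ : θ = a ∨ θ = -a)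
    (hφ : φ = c ∨ φ = -c) (h : cos (θ + φ) ≤ cos (θ - φ))
    (h' : Real.cos (a + c) ≤ Real.cos (a - c)) : cos (θ + φ) = Real.cos (a + c) := by
  have hsub : Real.cos (-a - c) = Real.cos (a + c) := by rw [← Real.cos_neg]; ring_nf
  have hadd : Real.cos (-a + c) = Real.cos (a - c) := by rw [← Real.cos_neg]; ring_nf
  rcases hθ with rfl | rfl <;> rcases hφ with rfl | rfl <;>
    simp only [← coe_neg, ← coe_add, ← coe_sub, cos_coe, ← sub_eq_add_neg, sub_neg_eq_add,
      hsub, hadd] at h ⊢ <;> linarith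

end Real.Angle

namespace EuclideanGeometry

variable {V P : Type*} [NormedAddCommGroup V] [InnerProductSpace ℝ V] [MetricSpace P]
  [NormedAddTorsor V P]

theorem cos_angle_le_cos_angle_of_dist_le {p q x y : P} (hpq : p ≠ q) (hxq : x ≠ q)
    (hxy : dist x q = dist y q) (h : dist p y ≤ dist p x) :
    Real.cos (∠ p q x) ≤ Real.cos (∠ p q y) := by
  have hsq : dist p y * dist p y ≤ dist p x * dist p x := mul_self_le_mul_self dist_nonneg h
  rw [law_cos p q x, law_cos p q y, ← hxy] at hsq
  have : 0 < dist p q * dist x q := mul_pos (dist_pos.2 hpq) (dist_pos.2 hxq)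
  nlinarith

variable [Fact (Module.finrank ℝ V = 2)] [Module.Oriented ℝ V (Fin 2)]

theorem angle_eq_of_oangle_eq_neg {q r x y : P} (hr : r ≠ q) (hx : x ≠ q) (hy : y ≠ q)
    (h : ∡ r q y = -∡ r q x) : ∠ r q y = ∠ r q x := by
  rw [angle_eq_abs_oangle_toReal hr hy, h, Real.Angle.abs_toReal_neg,
    angle_eq_abs_oangle_toReal hr hx]

theorem exists_dist_eq_dist_eq_oangle_eq_neg {q r x : P} (hr : r ≠ q) (hx : x ≠ q) :
    ∃ y, dist y q = dist x q ∧ dist y r = dist x r ∧ ∡ r q y = -∡ r q x := by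
  let o : Orientation ℝ V (Fin 2) := Module.Oriented.positiveOrientation
  set y := o.rotation (-2 • ∡ r q x) (x -ᵥ q) +ᵥ q
  have hyq : dist y q = dist x q := by
    rw [dist_eq_norm_vsub V, vadd_vsub, LinearIsometryEquiv.norm_map, ← dist_eq_norm_vsub V]
  have hy : y ≠ q := dist_pos.1 (hyq ▸ dist_pos.2 hx)
  have hoangle : ∡ r q y = -∡ r q x := by
    rw [oangle, vadd_vsub, o.oangle_rotation_right (vsub_ne_zero.2 hr) (vsub_ne_zero.2 hx)]
    show ∡ r q x + -2 • ∡ r q x = -∡ r q x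
    abel
  refine ⟨y, hyq, ?_, hoangle⟩
  have hry := law_cos r q y
  rw [hyq, angle_eq_of_oangle_eq_neg hr hx hy hoangle, ← law_cos r q x] at hry
  rw [dist_comm, dist_comm x]
  exact (mul_self_inj dist_nonneg dist_nonneg).1 hry

end EuclideanGeometry

theorem arc_endpoint_distance_general (p q r : Plane)
    (htri : ¬ Collinear ℝ ({p, q, r} : Set Plane))
    (δ lq : ℝ) (hlq : 0 < lq)
    (b : Plane) (hb : b ∈ Metric.sphere r δ ∩ Metric.sphere q lq)
    (hfar : ∀ b' ∈ Metric.sphere r δ ∩ Metric.sphere q lq, dist p b' ≤ dist p b)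
    (hcos : Real.cos (∠ p q r + ∠ r q b) ≤ Real.cos (∠ p q r - ∠ r q b)) :
    dist p b ^ 2 =
      dist p q ^ 2 + lq ^ 2 - 2 * dist p q * lq * Real.cos (∠ p q r + ∠ r q b) := by
  have hpq : p ≠ q := ne₁₂_of_not_collinear htri
  have hrq : r ≠ q := (ne₂₃_of_not_collinear htri).symm
  have hbq : dist b q = lq := hb.2
  have hb_ne : b ≠ q := dist_pos.1 (hbq ▸ hlq)
  obtain ⟨b', hb'q, hb'r, hoangle⟩ := exists_dist_eq_dist_eq_oangle_eq_neg hrq hb_ne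
  have hb'_ne : b' ≠ q := dist_pos.1 (hb'q ▸ hbq ▸ hlq)
  have hle := cos_angle_le_cos_angle_of_dist_le hpq hb_ne hb'q.symm
    (hfar b' ⟨hb'r.trans hb.1, hb'q.trans hbq⟩)
  rw [← cos_oangle_eq_cos_angle hpq hb_ne, ← cos_oangle_eq_cos_angle hpq hb'_ne,
    ← oangle_add hpq hrq hb_ne, ← oangle_add hpq hrq hb'_ne, hoangle, ← sub_eq_add_neg] at hle
  have hcos_pqb : Real.cos (∠ p q b) = Real.cos (∠ p q r + ∠ r q b) := by
    rw [← cos_oangle_eq_cos_angle hpq hb_ne, ← oangle_add hpq hrq hb_ne]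
    exact Real.Angle.cos_add_eq_of_cos_add_le_cos_sub (oangle_eq_angle_or_eq_neg_angle hpq hrq)
      (oangle_eq_angle_or_eq_neg_angle hrq hb_ne) hle hcos
  rw [sq, sq, sq, law_cos p q b, hbq, hcos_pqb]

/-- **Law-of-cosines evaluation of the arc endpoint distance.** The endpoint `b` of
the arc `B_p = {x ∈ C_r : |qx| ≥ l_q}` farther from `p` (an intersection point of
the circles around `r` and `q`) satisfies
`|pb|² = |pq|² + l_q² − 2|pq| l_q cos(ε_q + θ_q)`. -/
theorem arc_endpoint_distance (p q r : Plane)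
    (htri : ¬ Collinear ℝ ({p, q, r} : Set Plane))
    (δ lq : ℝ) (hδ : 0 < δ) (hlq : 0 < lq)
    (b : Plane) (hb : b ∈ Metric.sphere r δ ∩ Metric.sphere q lq)
    (hfar : ∀ b' ∈ Metric.sphere r δ ∩ Metric.sphere q lq, dist p b' ≤ dist p b)
    (hsum : ∠ p q r + ∠ r q b ≤ Real.pi)
    (hcos : Real.cos (∠ p q r + ∠ r q b) ≤ Real.cos (∠ p q r - ∠ r q b)) :
    dist p b ^ 2 =
      dist p q ^ 2 + lq ^ 2 - 2 * dist p q * lq * Real.cos (∠ p q r + ∠ r q b) :=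
  arc_endpoint_distance_general p q r htri δ lq hlq b hb hfar hcos
end
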